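/- (Strengthened four-squares theorem with matrix factorization) For every positive integer m, m is a sum of four integer squares; moreover, whenever mA = F² + G² + H² + K² for integers F, G, H, K, there exist integers a, b, c, d, x, y, z, v with m = a² + b² + c² + d², A = x² + y² + z² + v², and M[F,G,H,K] = Mᵀ[a,b,c,d]·M[x,y,z,v]. -/
import Mathlib

open Matrix

def quatMat (a b c d : ℤ) : Matrix (Fin 4) (Fin 4) ℤ :=
  !![a, b, c, d; -b, a, d, -c; -c, -d, a, b; -d, c, -b, a]

@[ext] structure Q4 where
  a : ℤ
  b : ℤ
  c : ℤ
  d : ℤ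

namespace Q4

def mul (p q : Q4) : Q4 :=
  ⟨p.a*q.a - p.b*q.b - p.c*q.c - p.d*q.d,
   p.a*q.b + p.b*q.a + p.d*q.c - p.c*q.d,
   p.a*q.c + p.c*q.a + p.b*q.d - p.d*q.b,
   p.a*q.d + p.d*q.a + p.c*q.b - p.b*q.c⟩

def conj (p : Q4) : Q4 := ⟨p.a, -p.b, -p.c, -p.d⟩
def norm (p : Q4) : ℤ := p.a^2 + p.b^2 + p.c^2 + p.d^2
def smul (n : ℤ) (p : Q4) : Q4 := ⟨n*p.a, n*p.b, n*p.c, n*p.d⟩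
def add (p q : Q4) : Q4 := ⟨p.a+q.a, p.b+q.b, p.c+q.c, p.d+q.d⟩
def sub (p q : Q4) : Q4 := ⟨p.a-q.a, p.b-q.b, p.c-q.c, p.d-q.d⟩
def D (n : ℤ) (p : Q4) : Prop := n ∣ p.a ∧ n ∣ p.b ∧ n ∣ p.c ∧ n ∣ p.d

theorem norm_mul (p q : Q4) : (p.mul q).norm = p.norm * q.norm := by
  simp only [mul, norm]; ring

theorem norm_conj (p : Q4) : p.conj.norm = p.norm := by simp only [conj, norm]; ring

theorem norm_smul (n : ℤ) (p : Q4) : (smul n p).norm = n^2 * p.norm := by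
  simp only [smul, norm]; ring

theorem conj_mul_mul (p w : Q4) : p.conj.mul (p.mul w) = smul p.norm w := by
  ext <;> (simp only [conj, mul, smul, norm]; ring)

theorem mul_conj_mul (p w : Q4) : p.mul (p.conj.mul w) = smul p.norm w := by
  ext <;> (simp only [conj, mul, smul, norm]; ring)

theorem conj_mul (p q : Q4) : (p.mul q).conj = q.conj.mul p.conj := by
  ext <;> (simp only [conj, mul]; ring)

theorem conj_conj (p : Q4) : p.conj.conj = p := by ext <;> simp [conj]

theorem mul_assoc' (p q w : Q4) : (p.mul q).mul w = p.mul (q.mul w) := by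
  ext <;> (simp only [mul]; ring)

theorem mul_smul' (n : ℤ) (p w : Q4) : p.mul (smul n w) = smul n (p.mul w) := by
  ext <;> (simp only [mul, smul]; ring)

theorem smul_smul' (n k : ℤ) (w : Q4) : smul n (smul k w) = smul (n*k) w := by
  ext <;> (simp only [smul]; ring)

theorem mul_sub_add (p w s : Q4) : p.mul w = (p.mul (w.sub s)).add (p.mul s) := by
  ext <;> (simp only [mul, sub, add]; ring)

theorem D_mul (n : ℤ) (p w : Q4) (h : D n w) : D n (p.mul w) := by
  obtain ⟨h1, h2, h3, h4⟩ := h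
  refine ⟨?_, ?_, ?_, ?_⟩ <;>
    simp only [mul] <;>
    first
    | exact dvd_sub (dvd_sub (dvd_sub (h1.mul_left _) (h2.mul_left _)) (h3.mul_left _)) (h4.mul_left _)
    | exact dvd_sub (dvd_add (dvd_add (h2.mul_left _) (h1.mul_left _)) (h3.mul_left _)) (h4.mul_left _)
    | exact dvd_sub (dvd_add (dvd_add (h3.mul_left _) (h1.mul_left _)) (h4.mul_left _)) (h2.mul_left _)
    | exact dvd_sub (dvd_add (dvd_add (h4.mul_left _) (h1.mul_left _)) (h2.mul_left _)) (h3.mul_left _)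

theorem D_add (n : ℤ) (p q : Q4) (hp : D n p) (hq : D n q) : D n (p.add q) :=
  ⟨dvd_add hp.1 hq.1, dvd_add hp.2.1 hq.2.1, dvd_add hp.2.2.1 hq.2.2.1, dvd_add hp.2.2.2 hq.2.2.2⟩

theorem D_smul (n : ℤ) (p : Q4) : D n (smul n p) :=
  ⟨Dvd.intro _ rfl, Dvd.intro _ rfl, Dvd.intro _ rfl, Dvd.intro _ rfl⟩

theorem exists_of_D {n : ℤ} {w : Q4} (h : D n w) : ∃ w', w = smul n w' := by
  obtain ⟨⟨ka, hka⟩, ⟨kb, hkb⟩, ⟨kc, hkc⟩, ⟨kd, hkd⟩⟩ := h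
  exact ⟨⟨ka, kb, kc, kd⟩, by ext <;> simp [smul, hka, hkb, hkc, hkd]⟩

theorem smul_cancel {n : ℤ} (hn : n ≠ 0) {w w' : Q4} (h : smul n w = smul n w') : w = w' := by
  have h1 := congrArg Q4.a h
  have h2 := congrArg Q4.b h
  have h3 := congrArg Q4.c h
  have h4 := congrArg Q4.d h
  simp only [smul] at h1 h2 h3 h4
  ext <;> [exact mul_left_cancel₀ hn h1; exact mul_left_cancel₀ hn h2;
           exact mul_left_cancel₀ hn h3; exact mul_left_cancel₀ hn h4]

theorem repOf (m A : ℤ) (hm : m ≠ 0) (u w q : Q4) (hu : u.norm = m)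
    (hw : w.norm = m * A) (hq : u.mul w = smul m q) :
    ∃ p q : Q4, m = p.norm ∧ A = q.norm ∧ w = p.conj.mul q := by
  refine ⟨u, q, hu.symm, ?_, ?_⟩
  · have h1 : m^2 * q.norm = m^2 * A := by
      have := congrArg norm hq
      rw [norm_mul, norm_smul, hu, hw] at this
      nlinarith [this]
    exact (mul_left_cancel₀ (pow_ne_zero 2 hm) h1).symm
  · have h2 : smul m (u.conj.mul q) = smul m w := by
      rw [← mul_smul', ← hq, conj_mul_mul, hu]
    exact (smul_cancel hm h2).symm

end Q4

theorem bmod_sub_dvd (x : ℤ) (m : ℕ) : (m:ℤ) ∣ x - Int.bmod x m := by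
  rw [Int.bmod_def]
  split
  · exact ⟨x / m, by rw [Int.emod_def]; ring⟩
  · exact ⟨x / m + 1, by rw [Int.emod_def]; ring⟩

theorem bmod_bound (x : ℤ) (m : ℕ) (hm : 0 < m) (ho : ¬ 2 ∣ m) :
    (2 * Int.bmod x m)^2 ≤ ((m:ℤ) - 1)^2 := by
  have h1 : 0 ≤ x % (m:ℤ) := Int.emod_nonneg x (by exact_mod_cast hm.ne')
  have h2 : x % (m:ℤ) < m := Int.emod_lt_of_pos x (by exact_mod_cast hm)
  have hb : -((m:ℤ) - 1) ≤ 2 * Int.bmod x m ∧ 2 * Int.bmod x m ≤ (m:ℤ) - 1 := by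
    rw [Int.bmod_def]
    split <;> constructor <;> omega
  nlinarith [hb.1, hb.2]

set_option maxHeartbeats 2000000 in
theorem key (m : ℕ) : 0 < m → ∀ (A : ℤ) (w : Q4), w.norm = (m:ℤ) * A →
    ∃ p q : Q4, (m:ℤ) = p.norm ∧ A = q.norm ∧ w = p.conj.mul q := by
  induction m using Nat.strong_induction_on with
  | _ m ih =>
  intro hm A w hw
  have hmne : ((m:ℤ)) ≠ 0 := by exact_mod_cast hm.ne'
  rcases Nat.even_or_odd m with he | ho
  · -- even case
    obtain ⟨k, hk⟩ := he
    have hk0 : 0 < k := by omega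
    have hklt : k < m := by omega
    have hmk : ((m:ℕ):ℤ) = 2 * (k:ℤ) := by omega
    have hfin : ∀ u₀ : Q4, u₀.norm = 2 → Q4.D 2 (u₀.mul w) →
        ∃ p q : Q4, ((m:ℕ):ℤ) = p.norm ∧ A = q.norm ∧ w = p.conj.mul q := by
      intro u₀ hu₀ hD
      obtain ⟨w₂, hdiv⟩ := Q4.exists_of_D hD
      have hw2 : w₂.norm = (k:ℤ) * A := by
        have hnn := congrArg Q4.norm hdiv
        rw [Q4.norm_mul, Q4.norm_smul, hu₀, hw, hmk] at hnn
        nlinarith [hnn]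
      obtain ⟨p₂, q, hp₂, hA, hw₂⟩ := ih k hklt hk0 A w₂ hw2
      refine Q4.repOf (m:ℤ) A hmne (p₂.mul u₀) w q ?_ hw ?_
      · rw [Q4.norm_mul, ← hp₂, hu₀, hmk]; ring
      · rw [Q4.mul_assoc', hdiv, Q4.mul_smul', hw₂, Q4.mul_conj_mul, Q4.smul_smul', ← hp₂, hmk]
    -- parity analysis
    have hF : (2:ℤ) ∣ w.a^2 + w.a := by
      obtain ⟨t, ht⟩ := Int.even_mul_succ_self w.a
      exact ⟨t, by linear_combination ht⟩
    have hG : (2:ℤ) ∣ w.b^2 + w.b := by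
      obtain ⟨t, ht⟩ := Int.even_mul_succ_self w.b
      exact ⟨t, by linear_combination ht⟩
    have hH : (2:ℤ) ∣ w.c^2 + w.c := by
      obtain ⟨t, ht⟩ := Int.even_mul_succ_self w.c
      exact ⟨t, by linear_combination ht⟩
    have hK : (2:ℤ) ∣ w.d^2 + w.d := by
      obtain ⟨t, ht⟩ := Int.even_mul_succ_self w.d
      exact ⟨t, by linear_combination ht⟩
    have hwn : w.a^2 + w.b^2 + w.c^2 + w.d^2 = 2 * ((k:ℤ) * A) := by
      have : w.norm = 2 * ((k:ℤ) * A) := by rw [hw, hmk]; ring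
      simpa [Q4.norm] using this
    have hsum : (2:ℤ) ∣ w.a + w.b + w.c + w.d := by
      obtain ⟨t1, h1⟩ := hF
      obtain ⟨t2, h2⟩ := hG
      obtain ⟨t3, h3⟩ := hH
      obtain ⟨t4, h4⟩ := hK
      exact ⟨t1 + t2 + t3 + t4 - (k:ℤ)*A, by linear_combination h1 + h2 + h3 + h4 - hwn⟩
    by_cases hab : (2:ℤ) ∣ w.a - w.b
    · refine hfin ⟨1,1,0,0⟩ (by norm_num [Q4.norm]) ⟨?_, ?_, ?_, ?_⟩ <;>
        simp only [Q4.mul] <;> ring_nf <;> omega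
    · by_cases hac : (2:ℤ) ∣ w.a - w.c
      · refine hfin ⟨1,0,1,0⟩ (by norm_num [Q4.norm]) ⟨?_, ?_, ?_, ?_⟩ <;>
          simp only [Q4.mul] <;> ring_nf <;> omega
      · refine hfin ⟨1,0,0,1⟩ (by norm_num [Q4.norm]) ⟨?_, ?_, ?_, ?_⟩ <;>
          simp only [Q4.mul] <;> ring_nf <;> omega
  · -- odd case
    have hodd : ¬ 2 ∣ m := by
      rcases ho with ⟨t, ht⟩
      omega
    set s : Q4 := ⟨Int.bmod w.a m, Int.bmod w.b m, Int.bmod w.c m, Int.bmod w.d m⟩ with hs_def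
    have hds : Q4.D (m:ℤ) (w.sub s) := by
      refine ⟨?_, ?_, ?_, ?_⟩ <;> simp only [Q4.sub, hs_def] <;> apply bmod_sub_dvd
    have hsnorm_dvd : (m:ℤ) ∣ s.norm := by
      obtain ⟨t1, h1⟩ := bmod_sub_dvd w.a m
      obtain ⟨t2, h2⟩ := bmod_sub_dvd w.b m
      obtain ⟨t3, h3⟩ := bmod_sub_dvd w.c m
      obtain ⟨t4, h4⟩ := bmod_sub_dvd w.d m
      have hwn : w.a^2 + w.b^2 + w.c^2 + w.d^2 = (m:ℤ) * A := by
        simpa [Q4.norm] using hw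
      refine ⟨A - (t1*(w.a + Int.bmod w.a m) + t2*(w.b + Int.bmod w.b m)
        + t3*(w.c + Int.bmod w.c m) + t4*(w.d + Int.bmod w.d m)), ?_⟩
      simp only [Q4.norm, hs_def]
      linear_combination hwn - (w.a + Int.bmod w.a m) * h1 - (w.b + Int.bmod w.b m) * h2
        - (w.c + Int.bmod w.c m) * h3 - (w.d + Int.bmod w.d m) * h4
    obtain ⟨r, hr⟩ := hsnorm_dvd
    have hb1 := bmod_bound w.a m hm hodd
    have hb2 := bmod_bound w.b m hm hodd
    have hb3 := bmod_bound w.c m hm hodd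
    have hb4 := bmod_bound w.d m hm hodd
    have hsn : s.norm = (Int.bmod w.a m)^2 + (Int.bmod w.b m)^2
        + (Int.bmod w.c m)^2 + (Int.bmod w.d m)^2 := by simp [Q4.norm, hs_def]
    have hr0 : 0 ≤ r := by
      nlinarith [sq_nonneg (Int.bmod w.a m), sq_nonneg (Int.bmod w.b m),
        sq_nonneg (Int.bmod w.c m), sq_nonneg (Int.bmod w.d m), hr, hsn,
        (by exact_mod_cast hm : (0:ℤ) < (m:ℤ))]
    have hrm : r < m := by
      nlinarith [hr, hsn, hb1, hb2, hb3, hb4, (by exact_mod_cast hm : (0:ℤ) < (m:ℤ))]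
    by_cases hr_eq : r = 0
    · -- s = 0, so m divides w
      have hz : Int.bmod w.a m = 0 ∧ Int.bmod w.b m = 0 ∧ Int.bmod w.c m = 0
          ∧ Int.bmod w.d m = 0 := by
        have h0 : s.norm = 0 := by rw [hr, hr_eq]; ring
        rw [hsn] at h0
        refine ⟨?_, ?_, ?_, ?_⟩ <;>
          nlinarith [sq_nonneg (Int.bmod w.a m), sq_nonneg (Int.bmod w.b m),
            sq_nonneg (Int.bmod w.c m), sq_nonneg (Int.bmod w.d m)]
      have hDw : Q4.D (m:ℤ) w := by
        refine ⟨?_, ?_, ?_, ?_⟩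
        · have := bmod_sub_dvd w.a m; rwa [hz.1, sub_zero] at this
        · have := bmod_sub_dvd w.b m; rwa [hz.2.1, sub_zero] at this
        · have := bmod_sub_dvd w.c m; rwa [hz.2.2.1, sub_zero] at this
        · have := bmod_sub_dvd w.d m; rwa [hz.2.2.2, sub_zero] at this
      obtain ⟨a, b, c, d, habcd⟩ := Nat.sum_four_squares m
      have hu : Q4.norm ⟨(a:ℤ), (b:ℤ), (c:ℤ), (d:ℤ)⟩ = (m:ℤ) := by
        simp only [Q4.norm]; exact_mod_cast habcd
      obtain ⟨q, hq⟩ := Q4.exists_of_D (Q4.D_mul (m:ℤ) ⟨(a:ℤ), (b:ℤ), (c:ℤ), (d:ℤ)⟩ w hDw)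
      exact Q4.repOf (m:ℤ) A hmne _ w q hu hw hq
    · -- 0 < r < m : descent
      have hr1 : 0 < r := lt_of_le_of_ne hr0 (Ne.symm hr_eq)
      have hrtoNat : ((r.toNat : ℕ) : ℤ) = r := Int.toNat_of_nonneg hr0
      have hrlt : r.toNat < m := by omega
      have hrpos : 0 < r.toNat := by omega
      have hsc : Q4.norm s.conj = ((r.toNat : ℕ) : ℤ) * ((m:ℕ) : ℤ) := by
        rw [Q4.norm_conj, hr, hrtoNat]; ring
      obtain ⟨a₁, b₁, ha₁, hb₁, hfac⟩ := ih r.toNat hrlt hrpos ((m:ℕ):ℤ) s.conj hsc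
      have hs : s = b₁.conj.mul a₁ := by
        have hcc := congrArg Q4.conj hfac
        rwa [Q4.conj_conj, Q4.conj_mul, Q4.conj_conj] at hcc
      have hbs : b₁.mul s = Q4.smul ((m:ℕ):ℤ) a₁ := by
        rw [hs, Q4.mul_conj_mul, ← hb₁]
      have hD : Q4.D ((m:ℕ):ℤ) (b₁.mul w) := by
        rw [Q4.mul_sub_add b₁ w s]
        refine Q4.D_add _ _ _ (Q4.D_mul _ _ _ hds) ?_
        rw [hbs]
        exact Q4.D_smul _ _
      obtain ⟨q, hq⟩ := Q4.exists_of_D hD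
      exact Q4.repOf (m:ℤ) A hmne b₁ w q hb₁.symm hw hq


theorem quatMat_mul (a b c d x y z v : ℤ) :
    quatMat a b c d * quatMat x y z v =
    quatMat (a*x - b*y - c*z - d*v) (a*y + b*x + d*z - c*v)
            (a*z + c*x + b*v - d*y) (a*v + d*x + c*y - b*z) := by
  ext i j
  fin_cases i <;> fin_cases j <;>
    simp [quatMat, Matrix.mul_apply, Fin.sum_univ_four] <;> ring

theorem quatMat_transpose (a b c d : ℤ) :
    (quatMat a b c d)ᵀ = quatMat a (-b) (-c) (-d) := by
  ext i j
  fin_cases i <;> fin_cases j <;> simp [quatMat]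

theorem four_squares_with_matrix_factorization (m : ℕ) (hm : 0 < m) :
    (∃ a b c d : ℤ, (m : ℤ) = a ^ 2 + b ^ 2 + c ^ 2 + d ^ 2) ∧
    ∀ A F G H K : ℤ, (m : ℤ) * A = F ^ 2 + G ^ 2 + H ^ 2 + K ^ 2 →
      ∃ a b c d x y z v : ℤ,
        (m : ℤ) = a ^ 2 + b ^ 2 + c ^ 2 + d ^ 2 ∧
        A = x ^ 2 + y ^ 2 + z ^ 2 + v ^ 2 ∧
        quatMat F G H K = (quatMat a b c d)ᵀ * quatMat x y z v := by
  constructor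
  · obtain ⟨a, b, c, d, h⟩ := Nat.sum_four_squares m
    exact ⟨(a:ℤ), (b:ℤ), (c:ℤ), (d:ℤ), by exact_mod_cast h.symm⟩
  · intro A F G H K hEq
    have hw : Q4.norm ⟨F, G, H, K⟩ = (m:ℤ) * A := by
      simp only [Q4.norm]; linarith
    obtain ⟨p, q, hp, hq, hfac⟩ := key m hm A ⟨F, G, H, K⟩ hw
    refine ⟨p.a, p.b, p.c, p.d, q.a, q.b, q.c, q.d,
      by simpa [Q4.norm] using hp, by simpa [Q4.norm] using hq, ?_⟩
    have h1 := congrArg Q4.a hfac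
    have h2 := congrArg Q4.b hfac
    have h3 := congrArg Q4.c hfac
    have h4 := congrArg Q4.d hfac
    simp only [Q4.mul, Q4.conj] at h1 h2 h3 h4
    rw [quatMat_transpose, quatMat_mul]
    rw [h1, h2, h3, h4]
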